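/- Let d ≥ 1, let G ∈ M_d(ℂ) be a Hermitian unitary matrix, let O ∈ M_d(ℂ) be Hermitian with O·G = −G·O, and let ρ ∈ M_d(ℂ) be a density matrix. With W_±(θ) = exp(−i(θ ± π/4)G), one has (1/(2π)) ∫₀^{2π} ( Tr[O·W₊(θ)·ρ·W₊(θ)†] − Tr[O·W₋(θ)·ρ·W₋(θ)†] )² dθ = 2·(Tr[Oρ])² + 2·(Tr[iOGρ])², and in particular this expectation is at least 2·(Tr[Oρ])². -/

import Mathlib

open Matrix MeasureTheory
open scoped ComplexOrder

noncomputable section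

/-- The rotation `W(θ) = exp(−iθG)` generated by a matrix `G`. -/
def Wrot {d : ℕ} (G : Matrix (Fin d) (Fin d) ℂ) (θ : ℝ) : Matrix (Fin d) (Fin d) ℂ :=
  NormedSpace.exp ((-(Complex.I * (θ : ℂ))) • G)

/-- The commuting part `O₁ = (O + G·O·G)/2` of `O` with respect to `G`. -/
def Opart1 {d : ℕ} (G O : Matrix (Fin d) (Fin d) ℂ) : Matrix (Fin d) (Fin d) ℂ :=
  (2⁻¹ : ℂ) • (O + G * O * G)

/-- The anticommuting part `O₂ = (O − G·O·G)/2` of `O` with respect to `G`. -/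
def Opart2 {d : ℕ} (G O : Matrix (Fin d) (Fin d) ℂ) : Matrix (Fin d) (Fin d) ℂ :=
  (2⁻¹ : ℂ) • (O - G * O * G)

/-! Since `G² = 1`, `W(θ) = cos θ - i sin θ G`, and anticommutation moves `O` across `W(θ)` as
`O W(θ) = W(-θ) O`; with `W(θ)† = W(-θ)` this gives `W(θ)† O W(θ) = W(-2θ) O`, hence
`Tr[O W(θ) ρ W(θ)†] = a cos 2θ - b sin 2θ` with `a = Tr[Oρ]`, `b = Tr[iOGρ]`. The shifts by `±π/4`
turn the difference into `-2 (a sin 2θ + b cos 2θ)`, whose square has mean `2 (a² + b²)`. -/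

theorem NormedSpace.exp_smul_of_mul_self_eq_one {A : Type*} [Ring A] [Algebra ℂ A]
    [TopologicalSpace A] [IsTopologicalRing A] [ContinuousSMul ℂ A] [T2Space A]
    {x : A} (hx : x * x = 1) (z : ℂ) :
    NormedSpace.exp (z • x) = Complex.cosh z • (1 : A) + Complex.sinh z • x := by
  have hx_even (n : ℕ) : x ^ (2 * n) = 1 := by rw [pow_mul, sq, hx, one_pow]
  rw [NormedSpace.exp_eq_tsum ℂ]
  refine HasSum.tsum_eq (HasSum.even_add_odd ?_ ?_)
  · convert (Complex.hasSum_cosh z).smul_const (1 : A) using 2 with n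
    rw [smul_pow, hx_even, smul_smul, div_eq_inv_mul]
  · convert (Complex.hasSum_sinh z).smul_const x using 2 with n
    rw [smul_pow, pow_succ x, hx_even, one_mul, smul_smul, div_eq_inv_mul]

open Real in
theorem integral_sq_mul_sin_add_mul_cos (a b : ℝ) {n : ℕ} (hn : n ≠ 0) :
    ∫ θ in (0 : ℝ)..2 * π, (a * sin (n * θ) + b * cos (n * θ)) ^ 2 = π * (a ^ 2 + b ^ 2) := by
  have hn' : (n : ℝ) ≠ 0 := Nat.cast_ne_zero.mpr hn
  set F : ℝ → ℝ := fun θ ↦ (a ^ 2 + b ^ 2) / 2 * θ + (b ^ 2 - a ^ 2) / (4 * n) * sin (2 * n * θ)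
    - a * b / (2 * n) * cos (2 * n * θ) with hF
  have hderiv (θ : ℝ) : HasDerivAt F ((a * sin (n * θ) + b * cos (n * θ)) ^ 2) θ := by
    have hlin (c : ℝ) : HasDerivAt (fun x : ℝ ↦ c * x) c θ := by
      simpa using (hasDerivAt_id θ).const_mul c
    refine (((hlin _).add (((hlin (2 * n)).sin).const_mul _)).sub
      (((hlin (2 * n)).cos).const_mul _)).congr_deriv ?_
    rw [show 2 * n * θ = 2 * (n * θ) by ring, sin_two_mul, cos_two_mul]
    field_simp
    linear_combination (-8 * a ^ 2) * sin_sq_add_cos_sq (n * θ)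
  have hsin : sin (2 * n * (2 * π)) = 0 := by
    simpa [mul_assoc] using sin_nat_mul_pi (2 * n * 2)
  have hcos : cos (2 * n * (2 * π)) = 1 := by
    simpa [mul_assoc] using cos_nat_mul_two_pi (2 * n)
  rw [intervalIntegral.integral_eq_sub_of_hasDerivAt (fun θ _ ↦ hderiv θ)
    (by apply Continuous.intervalIntegrable; fun_prop), hF]
  simp only [hsin, hcos, mul_zero, sin_zero, cos_zero]
  field_simp
  ring

section Rotation

variable {d : ℕ} {G O : Matrix (Fin d) (Fin d) ℂ}

theorem Wrot_eq_cos_smul_one_sub_sin_smul (hG : G * G = 1) (θ : ℝ) :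
    Wrot G θ = (Real.cos θ : ℂ) • 1 - (Complex.I * Real.sin θ) • G := by
  rw [Wrot, NormedSpace.exp_smul_of_mul_self_eq_one hG, mul_comm, ← neg_mul, Complex.cosh_mul_I,
    Complex.sinh_mul_I, Complex.cos_neg, Complex.sin_neg, Complex.ofReal_cos, Complex.ofReal_sin,
    neg_mul, neg_smul, mul_comm, sub_eq_add_neg]

theorem Wrot_add (G : Matrix (Fin d) (Fin d) ℂ) (s t : ℝ) :
    Wrot G (s + t) = Wrot G s * Wrot G t := by
  rw [Wrot, Wrot, Wrot,
    ← Matrix.exp_add_of_commute _ _ (((Commute.refl G).smul_left _).smul_right _), ← add_smul]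
  push_cast
  ring_nf

theorem conjTranspose_Wrot (hGherm : G.IsHermitian) (θ : ℝ) : (Wrot G θ)ᴴ = Wrot G (-θ) := by
  rw [Wrot, Wrot, ← Matrix.exp_conjTranspose, Matrix.conjTranspose_smul, hGherm.eq]
  congr 2
  simp

theorem mul_Wrot_of_anticommute (hG : G * G = 1) (hOG : O * G = -(G * O)) (θ : ℝ) :
    O * Wrot G θ = Wrot G (-θ) * O := by
  simp only [Wrot_eq_cos_smul_one_sub_sin_smul hG, Matrix.mul_sub, Matrix.sub_mul,
    Matrix.mul_smul, Matrix.smul_mul, hOG, Real.cos_neg, Real.sin_neg]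
  push_cast
  simp only [Matrix.mul_one, Matrix.one_mul, smul_neg, mul_neg, neg_smul, sub_neg_eq_add]

theorem conjTranspose_Wrot_mul_mul_Wrot_of_anticommute (hGherm : G.IsHermitian) (hG : G * G = 1)
    (hOG : O * G = -(G * O)) (θ : ℝ) :
    (Wrot G θ)ᴴ * O * Wrot G θ = Wrot G (-(2 * θ)) * O := by
  rw [conjTranspose_Wrot hGherm, Matrix.mul_assoc, mul_Wrot_of_anticommute hG hOG,
    ← Matrix.mul_assoc, ← Wrot_add]
  ring_nf

theorem trace_mul_Wrot_conj_of_anticommute (hGherm : G.IsHermitian) (hG : G * G = 1)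
    (hOG : O * G = -(G * O)) (ρ : Matrix (Fin d) (Fin d) ℂ) (θ : ℝ) :
    (O * (Wrot G θ * ρ * (Wrot G θ)ᴴ)).trace =
      Real.cos (2 * θ) * (O * ρ).trace - Real.sin (2 * θ) * ((Complex.I • (O * G)) * ρ).trace := by
  have hGO : G * O = -(O * G) := by rw [hOG, neg_neg]
  calc (O * (Wrot G θ * ρ * (Wrot G θ)ᴴ)).trace
      = ((Wrot G θ)ᴴ * O * Wrot G θ * ρ).trace := by
        rw [← Matrix.mul_assoc, Matrix.trace_mul_comm]
        simp only [Matrix.mul_assoc]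
    _ = (Wrot G (-(2 * θ)) * O * ρ).trace := by
        rw [conjTranspose_Wrot_mul_mul_Wrot_of_anticommute hGherm hG hOG]
    _ = _ := by
        simp only [Wrot_eq_cos_smul_one_sub_sin_smul hG, Matrix.sub_mul, Matrix.smul_mul,
          Matrix.one_mul, hGO, trace_sub, trace_smul, Real.cos_neg, Real.sin_neg, smul_eq_mul,
          Matrix.neg_mul, trace_neg]
        push_cast
        ring

end Rotation

theorem expectation_shifted_difference_sq_anticommuting_general
    (d : ℕ)
    (G O : Matrix (Fin d) (Fin d) ℂ)
    (hGherm : G.IsHermitian) (hGunit : G * G = 1)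
    (hanti : O * G = -(G * O))
    (ρ : Matrix (Fin d) (Fin d) ℂ) :
    (1 / (2 * Real.pi)) * (∫ θ in (0:ℝ)..(2 * Real.pi),
        (((O * (Wrot G (θ + Real.pi / 4) * ρ * (Wrot G (θ + Real.pi / 4))ᴴ)).trace.re)
          - ((O * (Wrot G (θ - Real.pi / 4) * ρ * (Wrot G (θ - Real.pi / 4))ᴴ)).trace.re)) ^ 2)
      = 2 * ((O * ρ).trace.re) ^ 2 + 2 * (((Complex.I • (O * G)) * ρ).trace.re) ^ 2
    ∧ (1 / (2 * Real.pi)) * (∫ θ in (0:ℝ)..(2 * Real.pi),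
        (((O * (Wrot G (θ + Real.pi / 4) * ρ * (Wrot G (θ + Real.pi / 4))ᴴ)).trace.re)
          - ((O * (Wrot G (θ - Real.pi / 4) * ρ * (Wrot G (θ - Real.pi / 4))ᴴ)).trace.re)) ^ 2)
      ≥ 2 * ((O * ρ).trace.re) ^ 2 := by
  set a := (O * ρ).trace.re
  set b := ((Complex.I • (O * G)) * ρ).trace.re
  have hre (φ : ℝ) : (O * (Wrot G φ * ρ * (Wrot G φ)ᴴ)).trace.re =
      Real.cos (2 * φ) * a - Real.sin (2 * φ) * b := by
    rw [trace_mul_Wrot_conj_of_anticommute hGherm hGunit hanti, Complex.sub_re,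
      Complex.re_ofReal_mul, Complex.re_ofReal_mul]
  have hdiff (θ : ℝ) :
      ((O * (Wrot G (θ + Real.pi / 4) * ρ * (Wrot G (θ + Real.pi / 4))ᴴ)).trace.re
        - (O * (Wrot G (θ - Real.pi / 4) * ρ * (Wrot G (θ - Real.pi / 4))ᴴ)).trace.re) ^ 2
      = 4 * (a * Real.sin ((2 : ℕ) * θ) + b * Real.cos ((2 : ℕ) * θ)) ^ 2 := by
    rw [hre, hre, mul_add, mul_sub, show (2 : ℝ) * (Real.pi / 4) = Real.pi / 2 by ring,
      Real.cos_add_pi_div_two, Real.sin_add_pi_div_two, Real.cos_sub_pi_div_two,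
      Real.sin_sub_pi_div_two]
    push_cast
    ring
  have hmean : (1 / (2 * Real.pi)) * (∫ θ in (0:ℝ)..(2 * Real.pi),
      ((O * (Wrot G (θ + Real.pi / 4) * ρ * (Wrot G (θ + Real.pi / 4))ᴴ)).trace.re
        - (O * (Wrot G (θ - Real.pi / 4) * ρ * (Wrot G (θ - Real.pi / 4))ᴴ)).trace.re) ^ 2)
      = 2 * a ^ 2 + 2 * b ^ 2 := by
    simp_rw [hdiff]
    rw [intervalIntegral.integral_const_mul, integral_sq_mul_sin_add_mul_cos a b two_ne_zero]
    field_simp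
    ring
  exact ⟨hmean, hmean ▸ le_add_of_nonneg_right (by positivity)⟩

/-- For a Hermitian observable `O` anticommuting with the Hermitian unitary `G`,
with `W_±(θ) = exp(−i(θ ± π/4)G)`, one has
`E_θ (Tr[O W₊ ρ W₊†] − Tr[O W₋ ρ W₋†])² = 2 Tr[Oρ]² + 2 Tr[iOGρ]² ≥ 2 Tr[Oρ]²`,
with `θ` uniform on `[0, 2π]`. -/
theorem expectation_shifted_difference_sq_anticommuting
    (d : ℕ) (hd : 1 ≤ d)
    (G O : Matrix (Fin d) (Fin d) ℂ)
    (hGherm : G.IsHermitian) (hGunit : G * G = 1) (hO : O.IsHermitian)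
    (hanti : O * G = -(G * O))
    (ρ : Matrix (Fin d) (Fin d) ℂ) (hρ : ρ.PosSemidef) (hρtr : ρ.trace = 1) :
    (1 / (2 * Real.pi)) * (∫ θ in (0:ℝ)..(2 * Real.pi),
        (((O * (Wrot G (θ + Real.pi / 4) * ρ * (Wrot G (θ + Real.pi / 4))ᴴ)).trace.re)
          - ((O * (Wrot G (θ - Real.pi / 4) * ρ * (Wrot G (θ - Real.pi / 4))ᴴ)).trace.re)) ^ 2)
      = 2 * ((O * ρ).trace.re) ^ 2 + 2 * (((Complex.I • (O * G)) * ρ).trace.re) ^ 2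
    ∧ (1 / (2 * Real.pi)) * (∫ θ in (0:ℝ)..(2 * Real.pi),
        (((O * (Wrot G (θ + Real.pi / 4) * ρ * (Wrot G (θ + Real.pi / 4))ᴴ)).trace.re)
          - ((O * (Wrot G (θ - Real.pi / 4) * ρ * (Wrot G (θ - Real.pi / 4))ᴴ)).trace.re)) ^ 2)
      ≥ 2 * ((O * ρ).trace.re) ^ 2 :=
  expectation_shifted_difference_sq_anticommuting_general d G O hGherm hGunit hanti ρ
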